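/- arXiv:1908.02102 — 4 statements merged into one kernel-verified Lean document; each statement's English description precedes it below -/
import Mathlib

section
/- Every positive integer is a sum of four generalized octagonal numbers P_8(x) = 3x² - 2x with x ∈ ℤ, but not every positive integer is a sum of three generalized octagonal numbers. -/
/-- The `x`-th generalized `m`-gonal number `P_m(x) = ((m-2)x² - (m-4)x)/2`. -/
def polygonal (m : ℕ) (x : ℤ) : ℤ := (((m : ℤ) - 2) * x ^ 2 - ((m : ℤ) - 4) * x) / 2

/-! Auxiliary machinery: every `N ≡ 1 [MOD 3]` with `N ≥ 4` is a sum of four squares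
each coprime to 3. -/

def Good (M : ℤ) : Prop :=
  ∃ x y z w : ℤ, ¬ (3:ℤ) ∣ x ∧ ¬ (3:ℤ) ∣ y ∧ ¬ (3:ℤ) ∣ z ∧ ¬ (3:ℤ) ∣ w ∧
    x ^ 2 + y ^ 2 + z ^ 2 + w ^ 2 = M

lemma sq_mod3_of_not_dvd (y : ℤ) (h : ¬ (3:ℤ) ∣ y) : y ^ 2 % 3 = 1 := by
  obtain ⟨q, r, hy, hr⟩ : ∃ q r : ℤ, y = 3 * q + r ∧ (r = 1 ∨ r = 2) :=
    ⟨y / 3, y % 3, by omega, by omega⟩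
  rcases hr with rfl | rfl <;> subst hy <;> ring_nf <;> omega

lemma sq_cases (y : ℤ) : ((3:ℤ) ∣ y ∧ y^2 % 3 = 0) ∨ (¬ (3:ℤ) ∣ y ∧ y^2 % 3 = 1) := by
  by_cases h : (3:ℤ) ∣ y
  · obtain ⟨q, rfl⟩ := h
    exact Or.inl ⟨⟨q, rfl⟩, by ring_nf; omega⟩
  · exact Or.inr ⟨h, sq_mod3_of_not_dvd y h⟩

lemma sign_choice (B C D : ℤ) (h : ¬ (3:ℤ) ∣ B ∨ ¬ (3:ℤ) ∣ C ∨ ¬ (3:ℤ) ∣ D) :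
    ∃ C' D' : ℤ, C' ^ 2 = C ^ 2 ∧ D' ^ 2 = D ^ 2 ∧ ¬ (3:ℤ) ∣ (B - C' - D') := by
  by_cases h1 : (3:ℤ) ∣ (B - C - D)
  · by_cases h2 : (3:ℤ) ∣ (B - C + D)
    · by_cases h3 : (3:ℤ) ∣ (B + C - D)
      · exact ⟨-C, -D, by ring, by ring, by omega⟩
      · exact ⟨-C, D, by ring, rfl, by omega⟩
    · exact ⟨C, -D, rfl, by ring, by omega⟩
  · exact ⟨C, D, rfl, rfl, h1⟩

lemma step (B C D : ℤ) (h : ¬ (3:ℤ) ∣ B ∨ ¬ (3:ℤ) ∣ C ∨ ¬ (3:ℤ) ∣ D) :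
    ∃ b c d : ℤ, ¬ (3:ℤ) ∣ b ∧ ¬ (3:ℤ) ∣ c ∧ ¬ (3:ℤ) ∣ d ∧
      b ^ 2 + c ^ 2 + d ^ 2 = 9 * (B ^ 2 + C ^ 2 + D ^ 2) := by
  obtain ⟨C', D', hC, hD, hnd⟩ := sign_choice B C D h
  refine ⟨B + 2*C' + 2*D', 2*B + C' - 2*D', 2*B - 2*C' + D', by omega, by omega, by omega, ?_⟩
  have : (B + 2*C' + 2*D') ^ 2 + (2*B + C' - 2*D') ^ 2 + (2*B - 2*C' + D') ^ 2
      = 9 * (B ^ 2 + C' ^ 2 + D' ^ 2) := by ring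
  rw [this, hC, hD]

lemma desc : ∀ n : ℕ, ∀ b c d : ℤ, b.natAbs + c.natAbs + d.natAbs ≤ n →
    (3:ℤ) ∣ b → (3:ℤ) ∣ c → (3:ℤ) ∣ d → ¬ (b = 0 ∧ c = 0 ∧ d = 0) →
    ∃ b' c' d' : ℤ, ¬ (3:ℤ) ∣ b' ∧ ¬ (3:ℤ) ∣ c' ∧ ¬ (3:ℤ) ∣ d' ∧
      b' ^ 2 + c' ^ 2 + d' ^ 2 = b ^ 2 + c ^ 2 + d ^ 2 := by
  intro n
  induction n using Nat.strong_induction_on with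
  | _ n IH =>
    intro b c d hn hb hc hd hne
    obtain ⟨B, rfl⟩ := hb
    obtain ⟨C, rfl⟩ := hc
    obtain ⟨D, rfl⟩ := hd
    by_cases hall : (3:ℤ) ∣ B ∧ (3:ℤ) ∣ C ∧ (3:ℤ) ∣ D
    · have hm : B.natAbs + C.natAbs + D.natAbs < n := by
        have h1 : (3*B).natAbs = 3 * B.natAbs := by simp [Int.natAbs_mul]
        have h2 : (3*C).natAbs = 3 * C.natAbs := by simp [Int.natAbs_mul]
        have h3 : (3*D).natAbs = 3 * D.natAbs := by simp [Int.natAbs_mul]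
        have hpos : 1 ≤ B.natAbs + C.natAbs + D.natAbs := by
          rcases (show ¬ (B = 0 ∧ C = 0 ∧ D = 0) by
            intro ⟨e1, e2, e3⟩; exact hne ⟨by rw [e1]; ring, by rw [e2]; ring,
              by rw [e3]; ring⟩) with h
          by_contra hc'
          push_neg at hc'
          have : B.natAbs = 0 ∧ C.natAbs = 0 ∧ D.natAbs = 0 := by omega
          exact h ⟨Int.natAbs_eq_zero.mp this.1, Int.natAbs_eq_zero.mp this.2.1,
            Int.natAbs_eq_zero.mp this.2.2⟩
        omega
      obtain ⟨b', c', d', h1, h2, h3, hsum⟩ :=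
        IH _ hm B C D le_rfl hall.1 hall.2.1 hall.2.2
          (by intro ⟨e1, e2, e3⟩; exact hne ⟨by rw [e1]; ring, by rw [e2]; ring,
            by rw [e3]; ring⟩)
      obtain ⟨b'', c'', d'', g1, g2, g3, gsum⟩ := step b' c' d' (Or.inl h1)
      exact ⟨b'', c'', d'', g1, g2, g3, by rw [gsum, hsum]; ring⟩
    · push_neg at hall
      have h' : ¬ (3:ℤ) ∣ B ∨ ¬ (3:ℤ) ∣ C ∨ ¬ (3:ℤ) ∣ D := by tauto
      obtain ⟨b', c', d', g1, g2, g3, gsum⟩ := step B C D h'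
      exact ⟨b', c', d', g1, g2, g3, by rw [gsum]; ring⟩

lemma core (M a b c d : ℤ) (ha : ¬ (3:ℤ) ∣ a) (hb : (3:ℤ) ∣ b) (hc : (3:ℤ) ∣ c)
    (hd : (3:ℤ) ∣ d) (hne : ¬ (b = 0 ∧ c = 0 ∧ d = 0))
    (hsum : a ^ 2 + b ^ 2 + c ^ 2 + d ^ 2 = M) : Good M := by
  obtain ⟨b', c', d', g1, g2, g3, gsum⟩ := desc _ b c d le_rfl hb hc hd hne
  exact ⟨a, b', c', d', ha, g1, g2, g3, by rw [← hsum]; linarith⟩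

lemma quat (p q r s a : ℤ) (h : p ^ 2 + q ^ 2 + r ^ 2 + s ^ 2 = a) :
    (2*p^2 - a)^2 + (2*p*q)^2 + (2*p*r)^2 + (2*p*s)^2 = a ^ 2 := by
  subst h; ring

lemma not_dvd_mul (p q : ℤ) (hp : ¬ (3:ℤ) ∣ p) (hq : ¬ (3:ℤ) ∣ q) :
    ¬ (3:ℤ) ∣ (2*p*q) := by
  intro h
  rcases (Int.prime_three.dvd_mul.mp h) with h' | h'
  · rcases (Int.prime_three.dvd_mul.mp h') with h'' | h''
    · omega
    · exact hp h''
  · exact hq h'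

lemma twocop (N a p q r s : ℤ) (hN : a ^ 2 = N) (hsum : p^2 + q^2 + r^2 + s^2 = a)
    (hp : ¬ (3:ℤ) ∣ p) (hq : ¬ (3:ℤ) ∣ q) (hr : (3:ℤ) ∣ r) (hs : (3:ℤ) ∣ s)
    (hodd : a % 2 = 1) (ha3 : a % 3 = 2) : Good N := by
  have hp2 := sq_mod3_of_not_dvd p hp
  apply core N (2*p*q) (2*p^2 - a) (2*p*r) (2*p*s)
  · exact not_dvd_mul p q hp hq
  · omega
  · exact Dvd.dvd.mul_left hr (2*p)
  · exact Dvd.dvd.mul_left hs (2*p)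
  · intro ⟨h1, _, _⟩
    omega
  · have := quat p q r s a hsum
    rw [hN] at this
    linarith

lemma sqcase (N : ℕ) (IH : ∀ m : ℕ, m < N → 4 ≤ m → m % 3 = 1 → Good m)
    (hN4 : 4 ≤ N) (A : ℕ) (hA : A ^ 2 = N) (hA3 : A % 3 ≠ 0) : Good N := by
  have hA2 : 2 ≤ A := by
    by_contra h
    push_neg at h
    interval_cases A <;> norm_num at hA <;> omega
  by_cases he : A % 2 = 0
  · -- A even
    obtain ⟨E, rfl⟩ : ∃ E, A = 2 * E := ⟨A / 2, by omega⟩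
    have hE3 : E % 3 ≠ 0 := by omega
    by_cases hE1 : E = 1
    · subst hE1
      have hN : N = 4 := by rw [← hA]; norm_num
      subst hN
      exact ⟨1, 1, 1, 1, by norm_num, by norm_num, by norm_num, by norm_num, by norm_num⟩
    · have hE2 : 2 ≤ E := by omega
      have hm4 : 4 ≤ E ^ 2 := by nlinarith
      have hm3 : E ^ 2 % 3 = 1 := by
        rw [Nat.pow_mod]
        have : E % 3 = 1 ∨ E % 3 = 2 := by omega
        rcases this with h | h <;> rw [h]
      have hmN : E ^ 2 < N := by nlinarith
      obtain ⟨x, y, z, w, h1, h2, h3, h4, hsum⟩ := IH _ hmN hm4 hm3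
      push_cast at hsum
      refine ⟨2*x, 2*y, 2*z, 2*w, by omega, by omega, by omega, by omega, ?_⟩
      have hNcast : (N:ℤ) = 4 * ((E:ℤ) ^ 2) := by
        have : N = 4 * E ^ 2 := by rw [← hA]; ring
        rw [this]; push_cast; ring
      rw [hNcast]
      linear_combination 4 * hsum
  · -- A odd
    have hAN : A < N := by nlinarith
    have haodd : (A:ℤ) % 2 = 1 := by omega
    have hNcast : ((A:ℤ)) ^ 2 = (N:ℤ) := by exact_mod_cast hA
    by_cases h1 : A % 3 = 1
    · have hA4 : 4 ≤ A := by omega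
      obtain ⟨p, q, z, w, hp, hq, hz, hw, hsum⟩ := IH A hAN hA4 h1
      have hp2 := sq_mod3_of_not_dvd p hp
      have ha3 : (A:ℤ) % 3 = 1 := by omega
      refine ⟨2*p^2 - A, 2*p*q, 2*p*z, 2*p*w, by omega, not_dvd_mul p q hp hq,
        not_dvd_mul p z hp hz, not_dvd_mul p w hp hw, ?_⟩
      rw [← hNcast]
      exact quat p q z w (A:ℤ) hsum
    · have ha3 : (A:ℤ) % 3 = 2 := by omega
      obtain ⟨p, q, r, s, hrep⟩ := Nat.sum_four_squares A
      have hsum : (p:ℤ)^2 + (q:ℤ)^2 + (r:ℤ)^2 + (s:ℤ)^2 = (A:ℤ) := by exact_mod_cast hrep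
      by_cases hp : (3:ℤ) ∣ (p:ℤ) <;> by_cases hq : (3:ℤ) ∣ (q:ℤ) <;>
        by_cases hr : (3:ℤ) ∣ (r:ℤ) <;> by_cases hs : (3:ℤ) ∣ (s:ℤ)
      all_goals first
      | exact twocop N A p q r s hNcast hsum hp hq hr hs haodd ha3
      | exact twocop N A p r q s hNcast (by linarith) hp hr hq hs haodd ha3
      | exact twocop N A p s q r hNcast (by linarith) hp hs hq hr haodd ha3
      | exact twocop N A q r p s hNcast (by linarith) hq hr hp hs haodd ha3
      | exact twocop N A q s p r hNcast (by linarith) hq hs hp hr haodd ha3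
      | exact twocop N A r s p q hNcast (by linarith) hr hs hp hq haodd ha3
      | (exfalso
         rcases sq_cases (p:ℤ) with ⟨e1, f1⟩ | ⟨e1, f1⟩ <;>
         rcases sq_cases (q:ℤ) with ⟨e2, f2⟩ | ⟨e2, f2⟩ <;>
         rcases sq_cases (r:ℤ) with ⟨e3, f3⟩ | ⟨e3, f3⟩ <;>
         rcases sq_cases (s:ℤ) with ⟨e4, f4⟩ | ⟨e4, f4⟩ <;>
         omega)

lemma onecop (N : ℕ) (IH : ∀ m : ℕ, m < N → 4 ≤ m → m % 3 = 1 → Good m)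
    (hN4 : 4 ≤ N) (a b c d : ℕ) (ha : ¬ (3:ℤ) ∣ (a:ℤ)) (hb : (3:ℤ) ∣ (b:ℤ))
    (hc : (3:ℤ) ∣ (c:ℤ)) (hd : (3:ℤ) ∣ (d:ℤ))
    (hsum : (a:ℤ)^2 + (b:ℤ)^2 + (c:ℤ)^2 + (d:ℤ)^2 = (N:ℤ)) : Good N := by
  by_cases hzero : (b:ℤ) = 0 ∧ (c:ℤ) = 0 ∧ (d:ℤ) = 0
  · obtain ⟨h1, h2, h3⟩ := hzero
    have hA : a ^ 2 = N := by
      have : (a:ℤ)^2 = (N:ℤ) := by rw [← hsum, h1, h2, h3]; ring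
      exact_mod_cast this
    exact sqcase N IH hN4 a hA (by omega)
  · exact core (N:ℤ) a b c d ha hb hc hd hzero hsum

lemma main4 : ∀ N : ℕ, 4 ≤ N → N % 3 = 1 → Good N := by
  intro N
  induction N using Nat.strong_induction_on with
  | _ N IH =>
    intro hN4 hN3
    obtain ⟨a, b, c, d, hrep⟩ := Nat.sum_four_squares N
    have hz : (a:ℤ)^2 + (b:ℤ)^2 + (c:ℤ)^2 + (d:ℤ)^2 = (N:ℤ) := by exact_mod_cast hrep
    have hN3' : (N:ℤ) % 3 = 1 := by omega
    by_cases ha : (3:ℤ) ∣ (a:ℤ) <;> by_cases hb : (3:ℤ) ∣ (b:ℤ) <;>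
      by_cases hc : (3:ℤ) ∣ (c:ℤ) <;> by_cases hd : (3:ℤ) ∣ (d:ℤ)
    all_goals first
    | exact ⟨a, b, c, d, ha, hb, hc, hd, hz⟩
    | exact onecop N IH hN4 a b c d ha hb hc hd hz
    | exact onecop N IH hN4 b a c d hb ha hc hd (by linarith)
    | exact onecop N IH hN4 c a b d hc ha hb hd (by linarith)
    | exact onecop N IH hN4 d a b c hd ha hb hc (by linarith)
    | (exfalso
       rcases sq_cases (a:ℤ) with ⟨e1, f1⟩ | ⟨e1, f1⟩ <;>
       rcases sq_cases (b:ℤ) with ⟨e2, f2⟩ | ⟨e2, f2⟩ <;>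
       rcases sq_cases (c:ℤ) with ⟨e3, f3⟩ | ⟨e3, f3⟩ <;>
       rcases sq_cases (d:ℤ) with ⟨e4, f4⟩ | ⟨e4, f4⟩ <;>
       omega)

lemma poly8val (x : ℤ) : polygonal 8 x = 3 * x ^ 2 - 2 * x := by
  unfold polygonal
  norm_num
  rw [show (6 * x ^ 2 - 4 * x : ℤ) = 2 * (3 * x ^ 2 - 2 * x) by ring]
  exact Int.mul_ediv_cancel_left _ two_ne_zero

lemma poly_of_coprime (y : ℤ) (h : ¬ (3:ℤ) ∣ y) :
    ∃ x : ℤ, 3 * polygonal 8 x = y ^ 2 - 1 := by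
  have h' : y % 3 = 1 ∨ y % 3 = 2 := by omega
  rcases h' with h' | h'
  · refine ⟨(1 - y) / 3, ?_⟩
    have hy : y = 1 - 3 * ((1 - y) / 3) := by omega
    rw [poly8val]
    nlinarith [hy]
  · refine ⟨(y + 1) / 3, ?_⟩
    have hy : y = 3 * ((y + 1) / 3) - 1 := by omega
    rw [poly8val]
    nlinarith [hy]

lemma poly8_tri (x : ℤ) : polygonal 8 x = 0 ∨ polygonal 8 x = 1 ∨ 5 ≤ polygonal 8 x := by
  rw [poly8val]
  obtain h | h | h | h : x ≤ -1 ∨ x = 0 ∨ x = 1 ∨ 2 ≤ x := by omega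
  · right; right; nlinarith
  · subst h; norm_num
  · subst h; norm_num
  · right; right; nlinarith

theorem octagonal_four_not_three :
    (∀ n : ℕ, 0 < n →
        ∃ x₁ x₂ x₃ x₄ : ℤ,
          polygonal 8 x₁ + polygonal 8 x₂ + polygonal 8 x₃ + polygonal 8 x₄ = (n : ℤ)) ∧
      ¬ ∀ n : ℕ, 0 < n →
          ∃ x₁ x₂ x₃ : ℤ, polygonal 8 x₁ + polygonal 8 x₂ + polygonal 8 x₃ = (n : ℤ) := by
  constructor
  · intro n hn
    obtain ⟨a, b, c, d, ha, hb, hc, hd, hsum⟩ :=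
      main4 (3 * n + 4) (by omega) (by omega)
    obtain ⟨x₁, h1⟩ := poly_of_coprime a ha
    obtain ⟨x₂, h2⟩ := poly_of_coprime b hb
    obtain ⟨x₃, h3⟩ := poly_of_coprime c hc
    obtain ⟨x₄, h4⟩ := poly_of_coprime d hd
    refine ⟨x₁, x₂, x₃, x₄, ?_⟩
    have hNc : ((3 * n + 4 : ℕ) : ℤ) = 3 * (n:ℤ) + 4 := by push_cast; ring
    rw [hNc] at hsum
    have h3n : 3 * (polygonal 8 x₁ + polygonal 8 x₂ + polygonal 8 x₃ + polygonal 8 x₄)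
        = 3 * (n:ℤ) := by linarith
    linarith
  · intro hall
    obtain ⟨x₁, x₂, x₃, h⟩ := hall 4 (by norm_num)
    have h4 : ((4:ℕ):ℤ) = 4 := by norm_num
    rw [h4] at h
    rcases poly8_tri x₁ with t1 | t1 | t1 <;>
      rcases poly8_tri x₂ with t2 | t2 | t2 <;>
        rcases poly8_tri x₃ with t3 | t3 | t3 <;> omega
end

section
/- Let m ≥ 78 be an integer. Then every positive integer n can be written as ∑_{i=1}^{4} P_m(x_i) + 5·∑_{j=1}^{⌈(m-3)/5⌉ - 1} P_m(y_j) with x_i, y_j ∈ ℤ, and the form ∑_{i=1}^{4} P_m(x_i) + 5·∑_{j=1}^{⌈(m-3)/5⌉ - 2} P_m(y_j) is not universal. Equivalently, ℓ_{m,5,4} = ⌈(m-3)/5⌉ + 3. -/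
lemma polygonal_eq_of (m : ℕ) (x w : ℤ) (h : x ^ 2 - x = 2 * w) :
    polygonal m x = ((m : ℤ) - 2) * w + x := by
  unfold polygonal
  rw [show ((m : ℤ) - 2) * x ^ 2 - ((m : ℤ) - 4) * x = 2 * (((m : ℤ) - 2) * w + x) by
    linear_combination ((m : ℤ) - 2) * h]
  exact Int.mul_ediv_cancel_left _ two_ne_zero

lemma polygonal_zero (m : ℕ) : polygonal m 0 = 0 := by
  rw [polygonal_eq_of m 0 0 (by ring)]; ring

lemma polygonal_one (m : ℕ) : polygonal m 1 = 1 := by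
  rw [polygonal_eq_of m 1 0 (by ring)]; ring

lemma polygonal_neg_one (m : ℕ) : polygonal m (-1) = (m : ℤ) - 3 := by
  rw [polygonal_eq_of m (-1) 1 (by ring)]; ring

lemma polygonal_two (m : ℕ) : polygonal m 2 = (m : ℤ) := by
  rw [polygonal_eq_of m 2 1 (by ring)]; ring

lemma polygonal_neg_two (m : ℕ) : polygonal m (-2) = 3 * (m : ℤ) - 8 := by
  rw [polygonal_eq_of m (-2) 3 (by ring)]; ring

lemma polygonal_add_neg (m : ℕ) (z : ℤ) :
    polygonal m z + polygonal m (-z) = ((m : ℤ) - 2) * z ^ 2 := by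
  obtain ⟨w1, h1⟩ : ∃ w1, z ^ 2 - z = 2 * w1 := by
    obtain ⟨w, hw⟩ := Int.even_mul_succ_self (z - 1)
    exact ⟨w, by linear_combination hw⟩
  obtain ⟨w2, h2⟩ : ∃ w2, (-z) ^ 2 - (-z) = 2 * w2 := by
    obtain ⟨w, hw⟩ := Int.even_mul_succ_self z
    exact ⟨w, by linear_combination hw⟩
  rw [polygonal_eq_of m z w1 h1, polygonal_eq_of m (-z) w2 h2]
  have h3 : w1 + w2 = z ^ 2 := by linarith
  linear_combination ((m : ℤ) - 2) * h3

lemma polygonal_trichotomy (m : ℕ) (hm : 5 ≤ m) (x : ℤ) :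
    polygonal m x = 0 ∨ polygonal m x = 1 ∨ (m : ℤ) - 3 ≤ polygonal m x := by
  obtain ⟨w, hw⟩ : ∃ w, x ^ 2 - x = 2 * w := by
    obtain ⟨w, h⟩ := Int.even_mul_succ_self (x - 1)
    exact ⟨w, by linear_combination h⟩
  have hP := polygonal_eq_of m x w hw
  have hm2 : (5 : ℤ) ≤ (m : ℤ) := by exact_mod_cast hm
  rcases (show x ≤ -1 ∨ x = 0 ∨ x = 1 ∨ 2 ≤ x by omega) with hx | hx | hx | hx
  · right; right
    have hw1 : -x ≤ w := by nlinarith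
    have h1 : ((m : ℤ) - 2) * (-x) ≤ ((m : ℤ) - 2) * w :=
      mul_le_mul_of_nonneg_left hw1 (by omega)
    nlinarith
  · left; subst hx; rw [polygonal_eq_of m 0 0 (by ring)]; ring
  · right; left; subst hx; rw [polygonal_eq_of m 1 0 (by ring)]; ring
  · right; right
    have hw1 : 1 ≤ w := by nlinarith
    have h2 : ((m : ℤ) - 2) * 1 ≤ ((m : ℤ) - 2) * w :=
      mul_le_mul_of_nonneg_left hw1 (by omega)
    nlinarith

lemma polygonal_nonneg (m : ℕ) (hm : 5 ≤ m) (x : ℤ) : 0 ≤ polygonal m x := by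
  have hm2 : (5 : ℤ) ≤ (m : ℤ) := by exact_mod_cast hm
  rcases polygonal_trichotomy m hm x with h | h | h <;> omega

lemma sum_fin_of_list (m k : ℕ) (l : List ℤ) (h : l.length ≤ k) :
    ∃ f : Fin k → ℤ, ∑ i, polygonal m (f i) = (l.map (polygonal m)).sum := by
  induction k generalizing l with
  | zero =>
    have : l = [] := List.length_eq_zero_iff.mp (by omega)
    subst this
    exact ⟨fun _ => 0, by simp⟩
  | succ k ih =>
    cases l with
    | nil =>
      exact ⟨fun _ => 0, by simp [polygonal_zero]⟩
    | cons a l2 =>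
      obtain ⟨f2, hf2⟩ := ih l2 (by simp at h; omega)
      refine ⟨Fin.cons a f2, ?_⟩
      rw [Fin.sum_univ_succ]
      simp only [Fin.cons_zero, Fin.cons_succ]
      rw [hf2]
      simp

lemma sum_map_replicate (m : ℕ) (k : ℕ) (a : ℤ) :
    ((List.replicate k a).map (polygonal m)).sum = (k : ℤ) * polygonal m a := by
  rw [List.map_replicate, List.sum_replicate, nsmul_eq_mul]

lemma xtable (L : ℕ) (r : ℤ) (hL : L ≤ 4) (h1 : -(L : ℤ) ≤ r) (h2 : r ≤ 4 - L) :
    ∃ b β c d : ℕ, b + β + c + d ≤ 4 ∧ b + β + 3 * d = L ∧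
      (c : ℤ) - b + 2 * β - 2 * d = r := by
  interval_cases L
  · interval_cases r
    · exact ⟨0,0,0,0, by norm_num, by norm_num, by norm_num⟩
    · exact ⟨0,0,1,0, by norm_num, by norm_num, by norm_num⟩
    · exact ⟨0,0,2,0, by norm_num, by norm_num, by norm_num⟩
    · exact ⟨0,0,3,0, by norm_num, by norm_num, by norm_num⟩
    · exact ⟨0,0,4,0, by norm_num, by norm_num, by norm_num⟩
  · interval_cases r
    · exact ⟨1,0,0,0, by norm_num, by norm_num, by norm_num⟩
    · exact ⟨1,0,1,0, by norm_num, by norm_num, by norm_num⟩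
    · exact ⟨1,0,2,0, by norm_num, by norm_num, by norm_num⟩
    · exact ⟨0,1,0,0, by norm_num, by norm_num, by norm_num⟩
    · exact ⟨0,1,1,0, by norm_num, by norm_num, by norm_num⟩
  · interval_cases r
    · exact ⟨2,0,0,0, by norm_num, by norm_num, by norm_num⟩
    · exact ⟨2,0,1,0, by norm_num, by norm_num, by norm_num⟩
    · exact ⟨2,0,2,0, by norm_num, by norm_num, by norm_num⟩
    · exact ⟨1,1,0,0, by norm_num, by norm_num, by norm_num⟩
    · exact ⟨1,1,1,0, by norm_num, by norm_num, by norm_num⟩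
  · interval_cases r
    · exact ⟨3,0,0,0, by norm_num, by norm_num, by norm_num⟩
    · exact ⟨0,0,0,1, by norm_num, by norm_num, by norm_num⟩
    · exact ⟨0,0,1,1, by norm_num, by norm_num, by norm_num⟩
    · exact ⟨0,0,2,1, by norm_num, by norm_num, by norm_num⟩
    · exact ⟨0,0,3,1, by norm_num, by norm_num, by norm_num⟩
  · interval_cases r
    · exact ⟨4,0,0,0, by norm_num, by norm_num, by norm_num⟩
    · exact ⟨1,0,0,1, by norm_num, by norm_num, by norm_num⟩
    · exact ⟨1,0,1,1, by norm_num, by norm_num, by norm_num⟩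
    · exact ⟨1,0,2,1, by norm_num, by norm_num, by norm_num⟩
    · exact ⟨0,1,0,1, by norm_num, by norm_num, by norm_num⟩

lemma assembler (m : ℕ) (n A D L U v r b β c d u t g Q : ℤ)
    (hn : n = ((m : ℤ) - 2) * A + D) (hA : A = 5 * U + L) (hD : D = 5 * v + r)
    (hlev : b + β + 3 * d = L) (hox : c - b + 2 * β - 2 * d = r)
    (h1 : u + g + Q = U) (h2 : t + 2 * g - u = v) :
    n = b * ((m : ℤ) - 3) + β * m + c + d * (3 * (m : ℤ) - 8)
      + 5 * (u * ((m : ℤ) - 3) + g * m + t + ((m : ℤ) - 2) * Q) := by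
  linear_combination hn + ((m : ℤ) - 2) * hA + hD - ((m : ℤ) - 2) * hlev - hox
    - 5 * ((m : ℤ) - 2) * h1 - 5 * h2

/-- The core arithmetic decomposition. -/
lemma core_exists (m n : ℕ) (hm : 78 ≤ m) :
    ∃ b β c d u t g Q : ℕ,
      b + β + c + d ≤ 4 ∧
      u + t + g + (if Q = 0 then 0 else 8) ≤ (m + 1) / 5 - 1 ∧
      (n : ℤ) = b * ((m : ℤ) - 3) + β * m + c + d * (3 * (m : ℤ) - 8)
        + 5 * (u * ((m : ℤ) - 3) + g * m + t + ((m : ℤ) - 2) * Q) := by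
  obtain ⟨K, hKgoal, hK1, hK2, hK3⟩ :
      ∃ K, (m + 1) / 5 - 1 = K ∧ 14 ≤ K ∧ 5 * K + 4 ≤ m ∧ m ≤ 5 * K + 8 :=
    ⟨(m + 1) / 5 - 1, rfl, by omega, by omega, by omega⟩
  rw [hKgoal]
  obtain ⟨A, D, hD, hAD⟩ : ∃ A D, D < m - 2 ∧ n = (m - 2) * A + D :=
    ⟨n / (m - 2), n % (m - 2), Nat.mod_lt _ (by omega), (Nat.div_add_mod n (m - 2)).symm⟩
  obtain ⟨U, L, hL5, hA5⟩ : ∃ U L, L < 5 ∧ A = 5 * U + L :=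
    ⟨A / 5, A % 5, Nat.mod_lt _ (by norm_num), (Nat.div_add_mod A 5).symm⟩
  obtain ⟨v, ρ, hρ5, hv5⟩ : ∃ v ρ, ρ < 5 ∧ D + L = 5 * v + ρ :=
    ⟨(D + L) / 5, (D + L) % 5, Nat.mod_lt _ (by norm_num), (Nat.div_add_mod (D + L) 5).symm⟩
  have hvK : v ≤ K + 1 := by omega
  -- ℤ-cast facts
  have e1 : ((m - 2 : ℕ) : ℤ) = (m : ℤ) - 2 := by omega
  have hnz : (n : ℤ) = ((m : ℤ) - 2) * A + D := by
    rw [← e1]; exact_mod_cast hAD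
  have hA5z : (A : ℤ) = 5 * U + L := by exact_mod_cast hA5
  have hDz : (D : ℤ) = 5 * (v : ℤ) + ((ρ : ℤ) - L) := by omega
  by_cases c1 : U + 2 ≤ K ∧ v ≤ 2 * U
  · -- Branch I
    obtain ⟨b, β, c, d, hbs, hlev, hox⟩ :=
      xtable L ((ρ : ℤ) - L) (by omega) (by omega) (by omega)
    have hlevz : (b : ℤ) + β + 3 * d = L := by exact_mod_cast hlev
    obtain ⟨g, tt, ht3, hg3⟩ : ∃ g tt, tt < 3 ∧ v + U = 3 * g + tt :=
      ⟨(v + U) / 3, (v + U) % 3, Nat.mod_lt _ (by norm_num), (Nat.div_add_mod (v + U) 3).symm⟩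
    have hgU : g ≤ U := by omega
    refine ⟨b, β, c, d, U - g, tt, g, 0, hbs, by simp; omega, ?_⟩
    have h1z : ((U - g : ℕ) : ℤ) + (g : ℤ) + ((0 : ℕ) : ℤ) = (U : ℤ) := by omega
    have h2z : ((tt : ℕ) : ℤ) + 2 * (g : ℤ) - ((U - g : ℕ) : ℤ) = (v : ℤ) := by omega
    exact assembler m n A D L U v ((ρ : ℤ) - L) b β c d ((U - g : ℕ) : ℤ) tt g ((0 : ℕ) : ℤ)
      hnz hA5z hDz hlevz hox h1z h2z
  · by_cases c2 : U + 2 ≤ K ∧ v ≤ K + U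
    · -- Branch II
      obtain ⟨b, β, c, d, hbs, hlev, hox⟩ :=
        xtable L ((ρ : ℤ) - L) (by omega) (by omega) (by omega)
      have hlevz : (b : ℤ) + β + 3 * d = L := by exact_mod_cast hlev
      have h2U : 2 * U < v := by omega
      refine ⟨b, β, c, d, 0, v - 2 * U, U, 0, hbs, by simp; omega, ?_⟩
      have h1z : ((0 : ℕ) : ℤ) + (U : ℤ) + ((0 : ℕ) : ℤ) = (U : ℤ) := by omega
      have h2z : ((v - 2 * U : ℕ) : ℤ) + 2 * (U : ℤ) - ((0 : ℕ) : ℤ) = (v : ℤ) := by omega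
      exact assembler m n A D L U v ((ρ : ℤ) - L) b β c d ((0 : ℕ) : ℤ) ((v - 2 * U : ℕ) : ℤ) U ((0 : ℕ) : ℤ)
        hnz hA5z hDz hlevz hox h1z h2z
    · by_cases c3 : K ≤ U + 1 ∧ v + 16 ≤ 2 * K
      · -- Branch III
        obtain ⟨b, β, c, d, hbs, hlev, hox⟩ :=
          xtable L ((ρ : ℤ) - L) (by omega) (by omega) (by omega)
        have hlevz : (b : ℤ) + β + 3 * d = L := by exact_mod_cast hlev
        obtain ⟨g, tt, ht2, hg2⟩ : ∃ g tt, tt < 2 ∧ v = 2 * g + tt :=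
          ⟨v / 2, v % 2, Nat.mod_lt _ (by norm_num), (Nat.div_add_mod v 2).symm⟩
        have hQ : U - g ≠ 0 := by omega
        refine ⟨b, β, c, d, 0, tt, g, U - g, hbs, by rw [if_neg hQ]; omega, ?_⟩
        have h1z : ((0 : ℕ) : ℤ) + (g : ℤ) + ((U - g : ℕ) : ℤ) = (U : ℤ) := by omega
        have h2z : ((tt : ℕ) : ℤ) + 2 * (g : ℤ) - ((0 : ℕ) : ℤ) = (v : ℤ) := by omega
        exact assembler m n A D L U v ((ρ : ℤ) - L) b β c d ((0 : ℕ) : ℤ) tt g ((U - g : ℕ) : ℤ)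
          hnz hA5z hDz hlevz hox h1z h2z
      · -- Branch IV : negative route at level A + 1
        have hIV : (U = 0 ∧ v = K + 1) ∨ (K ≤ U + 1 ∧ 2 * K ≤ v + 15) := by omega
        obtain ⟨U2, L2, hL25, hA25⟩ : ∃ U2 L2, L2 < 5 ∧ A + 1 = 5 * U2 + L2 :=
          ⟨(A + 1) / 5, (A + 1) % 5, Nat.mod_lt _ (by norm_num),
            (Nat.div_add_mod (A + 1) 5).symm⟩
        obtain ⟨s, hs1, hsD⟩ : ∃ s, 1 ≤ s ∧ D + s = m - 2 :=
          ⟨m - 2 - D, by omega, by omega⟩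
        obtain ⟨e2, w2, he25, hw2⟩ : ∃ e2 w2, e2 < 5 ∧ s + e2 = 5 * w2 + L2 :=
          ⟨(5 * K + 10 - s + L2) % 5, (s + (5 * K + 10 - s + L2) % 5 - L2) / 5,
            by omega, by omega⟩
        -- ℤ facts for level A+1
        have hnz2 : (n : ℤ) = ((m : ℤ) - 2) * ((A : ℤ) + 1) + ((D : ℤ) - ((m : ℤ) - 2)) := by
          linear_combination hnz
        have hA25z : ((A : ℤ) + 1) = 5 * (U2 : ℤ) + L2 := by exact_mod_cast hA25
        have hD2z : (D : ℤ) - ((m : ℤ) - 2) = 5 * (-(w2 : ℤ)) + ((e2 : ℤ) - L2) := by omega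
        obtain ⟨b, β, c, d, hbs, hlev, hox⟩ :=
          xtable L2 ((e2 : ℤ) - L2) (by omega) (by omega) (by omega)
        have hlevz : (b : ℤ) + β + 3 * d = (L2 : ℤ) := by exact_mod_cast hlev
        rcases hIV with ⟨hU0, hvk⟩ | ⟨hUK, hvb⟩
        · -- IV-a : tiny case
          have hsb : s + ρ ≤ L + 1 := by omega
          have hw2U2 : w2 ≤ U2 := by omega
          obtain ⟨g, tt, ht3, hg3⟩ : ∃ g tt, tt < 3 ∧ (U2 - w2) = 3 * g + tt :=
            ⟨(U2 - w2) / 3, (U2 - w2) % 3, Nat.mod_lt _ (by norm_num),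
              (Nat.div_add_mod (U2 - w2) 3).symm⟩
          have hgU2 : g ≤ U2 := by omega
          have hU2small : U2 ≤ 1 := by omega
          refine ⟨b, β, c, d, U2 - g, tt, g, 0, hbs, by simp; omega, ?_⟩
          have h1z : ((U2 - g : ℕ) : ℤ) + (g : ℤ) + ((0 : ℕ) : ℤ) = (U2 : ℤ) := by omega
          have h2z : ((tt : ℕ) : ℤ) + 2 * (g : ℤ) - ((U2 - g : ℕ) : ℤ) = -(w2 : ℤ) := by omega
          exact assembler m n ((A : ℤ) + 1) ((D : ℤ) - ((m : ℤ) - 2)) L2 U2 (-(w2 : ℤ))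
            ((e2 : ℤ) - L2) b β c d ((U2 - g : ℕ) : ℤ) tt g ((0 : ℕ) : ℤ) hnz2 hA25z hD2z hlevz hox h1z h2z
        · -- IV-b : big case
          have hDbig : 5 * v ≤ D + 4 := by omega
          have hw2b : w2 + 8 ≤ K := by omega
          have hQ : U2 - w2 ≠ 0 := by clear hnz hnz2 hD2z hA25z hDz hA5z hlevz hox e1 hAD; omega
          refine ⟨b, β, c, d, w2, 0, 0, U2 - w2, hbs, by rw [if_neg hQ]; clear hnz hnz2 hD2z hA25z hDz hA5z hlevz hox e1 hAD; omega, ?_⟩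
          have h1z : (w2 : ℤ) + ((0 : ℕ) : ℤ) + ((U2 - w2 : ℕ) : ℤ) = (U2 : ℤ) := by clear hnz hnz2 hD2z hA25z hDz hA5z hlevz hox e1 hAD; omega
          have h2z : ((0 : ℕ) : ℤ) + 2 * ((0 : ℕ) : ℤ) - (w2 : ℤ) = -(w2 : ℤ) := by clear hnz hnz2 hD2z hA25z hDz hA5z hlevz hox e1 hAD; omega
          exact assembler m n ((A : ℤ) + 1) ((D : ℤ) - ((m : ℤ) - 2)) L2 U2 (-(w2 : ℤ))
            ((e2 : ℤ) - L2) b β c d w2 ((0 : ℕ) : ℤ) ((0 : ℕ) : ℤ) ((U2 - w2 : ℕ) : ℤ) hnz2 hA25z hD2z hlevz hox h1z h2z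

lemma universal_part (m : ℕ) (hm : 78 ≤ m) (n : ℕ) :
    ∃ (x : Fin 4 → ℤ) (y : Fin ((m - 3 + 4) / 5 - 1) → ℤ),
      ∑ i, polygonal m (x i) + 5 * ∑ j, polygonal m (y j) = (n : ℤ) := by
  obtain ⟨b, β, c, d, u, t, g, Q, hbs, hbud, heq⟩ := core_exists m n hm
  have hKeq : (m - 3 + 4) / 5 - 1 = (m + 1) / 5 - 1 := by omega
  rw [hKeq]
  have hxlen : (List.replicate b (-1 : ℤ) ++ List.replicate β 2 ++ List.replicate c 1
      ++ List.replicate d (-2)).length ≤ 4 := by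
    simp only [List.length_append, List.length_replicate]; omega
  obtain ⟨x, hx⟩ := sum_fin_of_list m 4 _ hxlen
  have hxsum : ∑ i, polygonal m (x i)
      = (b : ℤ) * ((m : ℤ) - 3) + (β : ℤ) * m + (c : ℤ) + (d : ℤ) * (3 * (m : ℤ) - 8) := by
    rw [hx]
    simp only [List.map_append, List.sum_append, sum_map_replicate,
      polygonal_neg_one, polygonal_two, polygonal_one, polygonal_neg_two]
    ring
  by_cases hQ : Q = 0
  · have hylen : (List.replicate u (-1 : ℤ) ++ List.replicate g 2
        ++ List.replicate t 1).length ≤ (m + 1) / 5 - 1 := by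
      simp only [List.length_append, List.length_replicate]
      rw [hQ, if_pos rfl] at hbud; omega
    obtain ⟨y, hy⟩ := sum_fin_of_list m ((m + 1) / 5 - 1) _ hylen
    refine ⟨x, y, ?_⟩
    have hysum : ∑ j, polygonal m (y j)
        = (u : ℤ) * ((m : ℤ) - 3) + (g : ℤ) * m + (t : ℤ) := by
      rw [hy]
      simp only [List.map_append, List.sum_append, sum_map_replicate,
        polygonal_neg_one, polygonal_two, polygonal_one]
      ring
    rw [hxsum, hysum, heq, hQ]
    push_cast
    ring
  · obtain ⟨z1, z2, z3, z4, hz⟩ := Nat.sum_four_squares Q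
    have hzz : ((z1 : ℤ)) ^ 2 + ((z2 : ℤ)) ^ 2 + ((z3 : ℤ)) ^ 2 + ((z4 : ℤ)) ^ 2 = (Q : ℤ) := by
      exact_mod_cast hz
    have hylen : (List.replicate u (-1 : ℤ) ++ List.replicate g 2 ++ List.replicate t 1
        ++ [(z1 : ℤ), -(z1 : ℤ), (z2 : ℤ), -(z2 : ℤ), (z3 : ℤ), -(z3 : ℤ),
            (z4 : ℤ), -(z4 : ℤ)]).length ≤ (m + 1) / 5 - 1 := by
      simp only [List.length_append, List.length_replicate, List.length_cons,
        List.length_nil]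
      rw [if_neg hQ] at hbud; omega
    obtain ⟨y, hy⟩ := sum_fin_of_list m ((m + 1) / 5 - 1) _ hylen
    refine ⟨x, y, ?_⟩
    have hpair : (([(z1 : ℤ), -(z1 : ℤ), (z2 : ℤ), -(z2 : ℤ), (z3 : ℤ), -(z3 : ℤ),
          (z4 : ℤ), -(z4 : ℤ)]).map (polygonal m)).sum
        = ((m : ℤ) - 2) * (((z1 : ℤ)) ^ 2 + ((z2 : ℤ)) ^ 2 + ((z3 : ℤ)) ^ 2 + ((z4 : ℤ)) ^ 2) := by
      simp only [List.map_cons, List.map_nil, List.sum_cons, List.sum_nil]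
      linear_combination polygonal_add_neg m (z1 : ℤ) + polygonal_add_neg m (z2 : ℤ)
        + polygonal_add_neg m (z3 : ℤ) + polygonal_add_neg m (z4 : ℤ)
    have hysum : ∑ j, polygonal m (y j)
        = (u : ℤ) * ((m : ℤ) - 3) + (g : ℤ) * m + (t : ℤ) + ((m : ℤ) - 2) * (Q : ℤ) := by
      rw [hy]
      simp only [List.map_append, List.sum_append, sum_map_replicate,
        polygonal_neg_one, polygonal_two, polygonal_one]
      rw [hpair, hzz]
      ring
    rw [hxsum, hysum, heq]
lemma not_universal (m : ℕ) (hm : 78 ≤ m) :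
    ¬ ∀ n : ℕ, 0 < n →
        ∃ (x : Fin 4 → ℤ) (y : Fin ((m - 3 + 4) / 5 - 2) → ℤ),
          ∑ i, polygonal m (x i) + 5 * ∑ j, polygonal m (y j) = (n : ℤ) := by
  intro h
  have hm5 : 5 ≤ m := by omega
  obtain ⟨x, y, hxy⟩ := h (m - 4) (by omega)
  have hcast : ((m - 4 : ℕ) : ℤ) = (m : ℤ) - 4 := by omega
  rw [hcast] at hxy
  have hm' : (78 : ℤ) ≤ (m : ℤ) := by exact_mod_cast hm
  have hxnn : ∀ i, 0 ≤ polygonal m (x i) := fun i => polygonal_nonneg m hm5 (x i)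
  have hynn : ∀ j, 0 ≤ polygonal m (y j) := fun j => polygonal_nonneg m hm5 (y j)
  have hysum_nn : 0 ≤ ∑ j, polygonal m (y j) := Finset.sum_nonneg fun j _ => hynn j
  have hxsum_nn : 0 ≤ ∑ i, polygonal m (x i) := Finset.sum_nonneg fun i _ => hxnn i
  by_cases hbx : ∃ i, (m : ℤ) - 3 ≤ polygonal m (x i)
  · obtain ⟨i, hi⟩ := hbx
    have h1 : (m : ℤ) - 3 ≤ ∑ i, polygonal m (x i) :=
      le_trans hi (Finset.single_le_sum (fun i _ => hxnn i) (Finset.mem_univ i))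
    omega
  · by_cases hby : ∃ j, (m : ℤ) - 3 ≤ polygonal m (y j)
    · obtain ⟨j, hj⟩ := hby
      have h1 : (m : ℤ) - 3 ≤ ∑ j, polygonal m (y j) :=
        le_trans hj (Finset.single_le_sum (fun j _ => hynn j) (Finset.mem_univ j))
      omega
    · push_neg at hbx hby
      have hx1 : ∀ i, polygonal m (x i) ≤ 1 := by
        intro i
        rcases polygonal_trichotomy m hm5 (x i) with h1 | h1 | h1
        · omega
        · omega
        · exact absurd h1 (not_le.mpr (hbx i))
      have hy1 : ∀ j, polygonal m (y j) ≤ 1 := by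
        intro j
        rcases polygonal_trichotomy m hm5 (y j) with h1 | h1 | h1
        · omega
        · omega
        · exact absurd h1 (not_le.mpr (hby j))
      have hxle : ∑ i, polygonal m (x i) ≤ 4 := by
        calc ∑ i, polygonal m (x i) ≤ ∑ _i : Fin 4, (1 : ℤ) :=
              Finset.sum_le_sum fun i _ => hx1 i
          _ = 4 := by simp
      have hyle : ∑ j, polygonal m (y j) ≤ (((m - 3 + 4) / 5 - 2 : ℕ) : ℤ) := by
        calc ∑ j, polygonal m (y j) ≤ ∑ _j : Fin ((m - 3 + 4) / 5 - 2), (1 : ℤ) :=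
              Finset.sum_le_sum fun j _ => hy1 j
          _ = _ := by simp
      have hkb : 5 * ((m - 3 + 4) / 5 - 2) + 9 ≤ m := by omega
      have hkbZ : 5 * (((m - 3 + 4) / 5 - 2 : ℕ) : ℤ) + 9 ≤ (m : ℤ) := by exact_mod_cast hkb
      omega

theorem ell_m_five_four (m : ℕ) (hm : 78 ≤ m) :
    (∀ n : ℕ, 0 < n →
        ∃ (x : Fin 4 → ℤ) (y : Fin ((m - 3 + 4) / 5 - 1) → ℤ),
          ∑ i, polygonal m (x i) + 5 * ∑ j, polygonal m (y j) = (n : ℤ)) ∧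
      ¬ ∀ n : ℕ, 0 < n →
          ∃ (x : Fin 4 → ℤ) (y : Fin ((m - 3 + 4) / 5 - 2) → ℤ),
            ∑ i, polygonal m (x i) + 5 * ∑ j, polygonal m (y j) = (n : ℤ) :=
  ⟨fun n _ => universal_part m hm n, not_universal m hm⟩
end

section
/- Let r and m be integers with 7 ≤ r < m - 3, let k1 be a nonnegative integer, and let k3 be an integer with -5 ≤ k3 ≤ r - 6 such that k1(m-2) + k3 ≥ 0. If it is not the case that both -5 ≤ k3 ≤ -1 and k1 ≤ |k3| - 1, then there exist integers x_1, ..., x_{r-1} with ∑_{j=1}^{r-1} P_m(x_j) = k1(m-2) + k3; i.e., k1(m-2) + k3 is a sum of at most r-1 generalized m-gonal numbers. -/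
/-!
Since `2 P_m(x) = (m - 2) x (x - 1) + 2 x`, it suffices to find integers `x_j` with
`∑ x_j = k₃` and `∑ x_j (x_j - 1) = 2 k₁`; `m` plays no further role. The pairs `(a, -a)`,
`(c + 1, -c)`, `(c, -c - 1)` and `(a - 1, -a - 1)` contribute `0, 1, -1, -2` to the first sum
and `2a², 2c(c + 1), 2c(c + 1) + 2, 2a² + 4` to the second. So three pairs realise
`min(k₃, 1)` once `k₁ - j` is written as `a² + b² + c(c + 1)` or `a² + b(b + 1) + c(c + 1)` for
a suitable `0 ≤ j ≤ 5`, and ones supply the rest of `k₃`. These two representations of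
`k` say that `4k + 1` and `4k + 2` are sums of three squares.

That case of the three-squares theorem is proved after Gauss and Dirichlet. A prime
`p ≡ 2N - 1 (mod 4N)` has `(-N | p) = (-N | 2N - 1) = (-2 | 2N - 1) = 1`, and from `N ∣ p + 1`
and `p ∣ F² + N` one builds a positive definite integral ternary form of determinant `1` taking
the value `N`. Hermite's argument bounds the minimum `μ` of such a form by `27 μ³ ≤ 64`, so
`μ = 1`; splitting off a minimal vector and treating the remaining binary form the same way
shows that the form is equivalent to `x² + y² + z²`.
-/

open Matrix

def IsPrimitiveVector {ι : Type*} (v : ι → ℤ) : Prop := ∀ d : ℤ, (∀ i, d ∣ v i) → IsUnit d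

lemma IsPrimitiveVector.natCast_eq_one {ι : Type*} {v : ι → ℤ} (hv : IsPrimitiveVector v)
    {g : ℕ} (hg : ∀ i, (g : ℤ) ∣ v i) : g = 1 := by
  have := Int.isUnit_iff.mp (hv g hg)
  omega

lemma IsPrimitiveVector.exists_det_eq_one_fin_two {v : Fin 2 → ℤ} (hv : IsPrimitiveVector v) :
    ∃ U : Matrix (Fin 2) (Fin 2) ℤ, U.det = 1 ∧ U.col 0 = v := by
  have hg : Int.gcd (v 0) (v 1) = 1 := hv.natCast_eq_one fun i => by
    fin_cases i
    exacts [Int.gcd_dvd_left _ _, Int.gcd_dvd_right _ _]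
  refine ⟨!![v 0, -Int.gcdB (v 0) (v 1); v 1, Int.gcdA (v 0) (v 1)], ?_, ?_⟩
  · rw [det_fin_two_of]
    linear_combination (Int.gcd_eq_gcd_ab (v 0) (v 1)).symm.trans (by rw [hg])
  · ext j; fin_cases j <;> rfl

lemma IsPrimitiveVector.exists_det_eq_one_fin_three {v : Fin 3 → ℤ}
    (hv : IsPrimitiveVector v) : ∃ U : Matrix (Fin 3) (Fin 3) ℤ, U.det = 1 ∧ U.col 0 = v := by
  set g : ℤ := ↑(Int.gcd (v 0) (v 1))
  have hg0 : g ∣ v 0 := Int.gcd_dvd_left _ _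
  have hg1 : g ∣ v 1 := Int.gcd_dvd_right _ _
  have hbez : g * Int.gcdA g (v 2) + v 2 * Int.gcdB g (v 2) = 1 := by
    have h1 : Int.gcd g (v 2) = 1 := hv.natCast_eq_one fun i => by
      fin_cases i
      exacts [(Int.gcd_dvd_left _ _).trans hg0, (Int.gcd_dvd_left _ _).trans hg1,
        Int.gcd_dvd_right _ _]
    rw [← Int.gcd_eq_gcd_ab, h1]; rfl
  set u := Int.gcdA g (v 2)
  set w := Int.gcdB g (v 2)
  rcases eq_or_ne g 0 with h | h
  · obtain ⟨h0, h1⟩ : v 0 = 0 ∧ v 1 = 0 := by simpa [g] using h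
    refine ⟨!![0, 1, 0; 0, 0, w; v 2, 0, 0], ?_, ?_⟩
    · rw [det_fin_three]
      simp only [of_apply, cons_val', cons_val_zero, cons_val_one, cons_val, cons_val_fin_one]
      linear_combination hbez - u * h
    · ext j; fin_cases j <;> simp [h0, h1]
  · obtain ⟨p, hp⟩ := hg0
    obtain ⟨q, hq⟩ := hg1
    set x := Int.gcdA (v 0) (v 1)
    set y := Int.gcdB (v 0) (v 1)
    have hxy : v 0 * x + v 1 * y = g := (Int.gcd_eq_gcd_ab (v 0) (v 1)).symm
    have hpq : p * x + q * y = 1 :=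
      mul_left_cancel₀ h (by linear_combination hxy - x * hp - y * hq)
    refine ⟨!![v 0, -y, -p * w; v 1, x, -q * w; v 2, 0, u], ?_, ?_⟩
    · rw [det_fin_three]
      simp only [of_apply, cons_val', cons_val_zero, cons_val_one, cons_val, cons_val_fin_one]
      linear_combination hbez + w * v 2 * hpq + u * hxy
    · ext j; fin_cases j <;> rfl

lemma exists_sq_two_mul_mul_add_le {a : ℤ} (ha : 0 < a) (b : ℤ) :
    ∃ t : ℤ, (2 * (a * t + b)) ^ 2 ≤ a ^ 2 := by
  have h0 := Int.emod_nonneg b ha.ne'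
  have h1 := Int.emod_lt_of_pos b ha
  have h2 := Int.emod_add_mul_ediv b a
  rcases le_or_gt (2 * (b % a)) a with h | h
  · exact ⟨-(b / a), by nlinarith⟩
  · exact ⟨-(b / a) - 1, by nlinarith⟩

namespace Matrix

section

variable {ι : Type*} [Fintype ι]

lemma dotProduct_transpose_mul_mul_mulVec (U M : Matrix ι ι ℤ) (w : ι → ℤ) :
    w ⬝ᵥ ((Uᵀ * M * U) *ᵥ w) = (U *ᵥ w) ⬝ᵥ (M *ᵥ (U *ᵥ w)) := by
  rw [← mulVec_mulVec, ← mulVec_mulVec, dotProduct_mulVec, vecMul_transpose]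

lemma PosDef.dotProduct_mulVec_pos_int {M : Matrix ι ι ℤ} (hM : M.PosDef) {v : ι → ℤ}
    (hv : v ≠ 0) : 0 < v ⬝ᵥ (M *ᵥ v) := by
  simpa using hM.dotProduct_mulVec_pos hv

lemma PosDef.isPrimitiveVector_of_forall_le {M : Matrix ι ι ℤ} (hM : M.PosDef) {v : ι → ℤ}
    (hv : v ≠ 0) (hmin : ∀ w ≠ 0, v ⬝ᵥ (M *ᵥ v) ≤ w ⬝ᵥ (M *ᵥ w)) : IsPrimitiveVector v := by
  intro d hd
  choose w hw using hd
  have hvw : v = d • w := funext hw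
  have hw0 : w ≠ 0 := by rintro rfl; simp [hvw] at hv
  have hd0 : d ≠ 0 := by rintro rfl; simp [hvw] at hv
  have hQ : v ⬝ᵥ (M *ᵥ v) = d ^ 2 * w ⬝ᵥ (M *ᵥ w) := by
    rw [hvw, mulVec_smul, dotProduct_smul, smul_dotProduct, smul_eq_mul, smul_eq_mul]; ring
  have hpos := hM.dotProduct_mulVec_pos_int hw0
  have hd2 : d ^ 2 ≤ 1 := by nlinarith [hmin w hw0]
  have : -1 ≤ d ∧ d ≤ 1 := ⟨by nlinarith, by nlinarith⟩
  rw [Int.isUnit_iff]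
  omega

variable [DecidableEq ι]

lemma transpose_mul_mul_apply_self (U M : Matrix ι ι ℤ) (i : ι) :
    (Uᵀ * M * U) i i = U.col i ⬝ᵥ (M *ᵥ U.col i) := by
  rw [← mulVec_single_one, ← dotProduct_transpose_mul_mul_mulVec]
  simp

lemma forall_le_of_col_eq {M : Matrix ι ι ℤ} {v : ι → ℤ}
    (hmin : ∀ w ≠ 0, v ⬝ᵥ (M *ᵥ v) ≤ w ⬝ᵥ (M *ᵥ w)) {U : Matrix ι ι ℤ} (hU : IsUnit U.det)
    {i : ι} (hUv : U.col i = v) : ∀ w ≠ 0, (Uᵀ * M * U) i i ≤ w ⬝ᵥ ((Uᵀ * M * U) *ᵥ w) := by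
  intro w hw
  rw [transpose_mul_mul_apply_self, hUv, dotProduct_transpose_mul_mul_mulVec]
  refine hmin _ fun h => hw ?_
  exact mulVec_injective_of_isUnit ((isUnit_iff_isUnit_det U).mpr hU)
    (h.trans (mulVec_zero U).symm)

lemma exists_eq_transpose_mul_self_of_transpose_mul_mul {M U W : Matrix ι ι ℤ}
    (hU : IsUnit U.det) (h : Uᵀ * M * U = Wᵀ * W) : ∃ V : Matrix ι ι ℤ, M = Vᵀ * V := by
  refine ⟨W * U⁻¹, ?_⟩
  rw [transpose_mul, Matrix.mul_assoc, ← Matrix.mul_assoc Wᵀ, ← h, transpose_nonsing_inv,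
    Matrix.mul_assoc, mul_nonsing_inv _ hU, Matrix.mul_one, ← Matrix.mul_assoc,
    nonsing_inv_mul _ (by simpa using hU), Matrix.one_mul]

namespace PosDef

variable {M : Matrix ι ι ℤ}

lemma transpose_mul_mul (hM : M.PosDef) {U : Matrix ι ι ℤ} (hU : IsUnit U.det) :
    (Uᵀ * M * U).PosDef := by
  simpa [conjTranspose_eq_transpose_of_trivial] using hM.conjTranspose_mul_mul_same
    (mulVec_injective_of_isUnit ((isUnit_iff_isUnit_det U).mpr hU))

lemma exists_forall_le [Nonempty ι] (hM : M.PosDef) :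
    ∃ v ≠ 0, ∀ w ≠ 0, v ⬝ᵥ (M *ᵥ v) ≤ w ⬝ᵥ (M *ᵥ w) := by
  obtain ⟨_, ⟨v, hv, rfl⟩, hmin⟩ := Int.exists_least_of_bdd
    (P := fun z => ∃ v ≠ 0, v ⬝ᵥ (M *ᵥ v) = z)
    ⟨0, fun _ ⟨v, hv, h⟩ => h ▸ (hM.dotProduct_mulVec_pos_int hv).le⟩
    ⟨_, Pi.single (Classical.arbitrary ι) 1, by simp, rfl⟩
  exact ⟨v, hv, fun w hw => hmin _ ⟨w, hw, rfl⟩⟩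

lemma exists_det_eq_one_forall_le [Nonempty ι] (hM : M.PosDef) (i : ι)
    (hcompl : ∀ v : ι → ℤ, IsPrimitiveVector v → ∃ U : Matrix ι ι ℤ, U.det = 1 ∧ U.col i = v) :
    ∃ U : Matrix ι ι ℤ, U.det = 1 ∧ ∀ w ≠ 0, (Uᵀ * M * U) i i ≤ w ⬝ᵥ ((Uᵀ * M * U) *ᵥ w) := by
  obtain ⟨v, hv, hmin⟩ := hM.exists_forall_le
  obtain ⟨U, hU, hUv⟩ := hcompl v (hM.isPrimitiveVector_of_forall_le hv hmin)
  exact ⟨U, hU, forall_le_of_col_eq hmin (by simp [hU]) hUv⟩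

end PosDef

end

lemma IsSymm.eq_transpose_mul_self_fin_two {M : Matrix (Fin 2) (Fin 2) ℤ} (hM : M.IsSymm)
    (h00 : M 0 0 = 1) (hdet : M.det = 1) : M = !![1, M 0 1; 0, 1]ᵀ * !![1, M 0 1; 0, 1] := by
  rw [det_fin_two, h00, hM.apply 0 1] at hdet
  ext i j
  fin_cases i <;> fin_cases j <;> simp [mul_apply, h00, hM.apply 0 1]
  linarith

namespace PosDef

section Binary

variable {M : Matrix (Fin 2) (Fin 2) ℤ}

lemma three_mul_sq_le_four_mul_det (hM : M.PosDef) (hmin : ∀ w ≠ 0, M 0 0 ≤ w ⬝ᵥ (M *ᵥ w)) :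
    3 * M 0 0 ^ 2 ≤ 4 * M.det := by
  have hsym : M 1 0 = M 0 1 := (isHermitian_iff_isSymm.mp hM.1).apply 0 1
  have ha : 0 < M 0 0 := hM.diag_pos
  obtain ⟨t, ht⟩ := exists_sq_two_mul_mul_add_le ha (M 0 1)
  have hQ : M 0 0 * (![t, 1] ⬝ᵥ (M *ᵥ ![t, 1])) = (M 0 0 * t + M 0 1) ^ 2 + M.det := by
    simp only [dotProduct, mulVec, Fin.sum_univ_two, cons_val_zero, cons_val_one,
      cons_val_fin_one, det_fin_two, hsym]
    ring
  nlinarith [mul_le_mul_of_nonneg_left (hmin ![t, 1] (by simp)) ha.le]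

lemma exists_det_eq_one_forall_le_fin_two (hM : M.PosDef) :
    ∃ U : Matrix (Fin 2) (Fin 2) ℤ, U.det = 1 ∧
      ∀ w ≠ 0, (Uᵀ * M * U) 0 0 ≤ w ⬝ᵥ ((Uᵀ * M * U) *ᵥ w) :=
  hM.exists_det_eq_one_forall_le 0 fun _ hv => hv.exists_det_eq_one_fin_two

lemma exists_three_mul_sq_le_four_mul_det (hM : M.PosDef) :
    ∃ v ≠ 0, 3 * (v ⬝ᵥ (M *ᵥ v)) ^ 2 ≤ 4 * M.det := by
  obtain ⟨U, hU, hmin⟩ := hM.exists_det_eq_one_forall_le_fin_two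
  refine ⟨U.col 0, fun h => by simpa [hU] using det_eq_zero_of_column_eq_zero 0 (congrFun h), ?_⟩
  have := (hM.transpose_mul_mul (U := U) (by simp [hU])).three_mul_sq_le_four_mul_det hmin
  simpa [transpose_mul_mul_apply_self, det_mul, hU] using this

lemma exists_eq_transpose_mul_self_fin_two (hM : M.PosDef) (hdet : M.det = 1) :
    ∃ V : Matrix (Fin 2) (Fin 2) ℤ, M = Vᵀ * V := by
  obtain ⟨U, hU, hmin⟩ := hM.exists_det_eq_one_forall_le_fin_two
  have hM' := hM.transpose_mul_mul (U := U) (by simp [hU])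
  have hdet' : (Uᵀ * M * U).det = 1 := by simp [det_mul, hU, hdet]
  have h00 : (Uᵀ * M * U) 0 0 = 1 := by
    nlinarith [hM'.three_mul_sq_le_four_mul_det hmin, hM'.diag_pos (i := 0)]
  exact exists_eq_transpose_mul_self_of_transpose_mul_mul (by simp [hU])
    ((isHermitian_iff_isSymm.mp hM'.1).eq_transpose_mul_self_fin_two h00 hdet')

end Binary

end PosDef

/-- `M 0 0` times the Schur complement of the corner entry `M 0 0` of `M`. -/
def cornerSchur (M : Matrix (Fin 3) (Fin 3) ℤ) : Matrix (Fin 2) (Fin 2) ℤ :=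
  !![M 0 0 * M 1 1 - M 0 1 ^ 2, M 0 0 * M 1 2 - M 0 1 * M 0 2;
     M 0 0 * M 1 2 - M 0 1 * M 0 2, M 0 0 * M 2 2 - M 0 2 ^ 2]

namespace IsSymm

variable {M : Matrix (Fin 3) (Fin 3) ℤ}

lemma apply_zero_zero_mul_dotProduct_mulVec (hM : M.IsSymm) (x y z : ℤ) :
    M 0 0 * (![x, y, z] ⬝ᵥ (M *ᵥ ![x, y, z])) =
      (M 0 0 * x + M 0 1 * y + M 0 2 * z) ^ 2 + ![y, z] ⬝ᵥ (cornerSchur M *ᵥ ![y, z]) := by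
  simp only [dotProduct, mulVec, Fin.sum_univ_two, Fin.sum_univ_three, cornerSchur, of_apply,
    cons_val', cons_val_zero, cons_val_one, cons_val, cons_val_fin_one, hM.apply 0 1,
    hM.apply 0 2, hM.apply 1 2]
  ring

lemma det_cornerSchur (hM : M.IsSymm) : (cornerSchur M).det = M 0 0 * M.det := by
  rw [cornerSchur, det_fin_two_of, det_fin_three, hM.apply 0 1, hM.apply 0 2, hM.apply 1 2]
  ring

lemma eq_transpose_mul_self_fin_three (hM : M.IsSymm) (h00 : M 0 0 = 1)
    {W : Matrix (Fin 2) (Fin 2) ℤ} (hW : cornerSchur M = Wᵀ * W) :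
    M = !![1, M 0 1, M 0 2; 0, W 0 0, W 0 1; 0, W 1 0, W 1 1]ᵀ *
      !![1, M 0 1, M 0 2; 0, W 0 0, W 0 1; 0, W 1 0, W 1 1] := by
  have h11 := congrFun₂ hW 0 0
  have h12 := congrFun₂ hW 0 1
  have h22 := congrFun₂ hW 1 1
  simp only [cornerSchur, h00, one_mul, of_apply, cons_val', cons_val_zero, cons_val_one,
    cons_val_fin_one, mul_apply, transpose_apply, Fin.sum_univ_two] at h11 h12 h22
  ext i j
  fin_cases i <;> fin_cases j <;>
    simp [mul_apply, Fin.sum_univ_three, h00, hM.apply 0 1, hM.apply 0 2, hM.apply 1 2] <;>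
    linarith

end IsSymm

namespace PosDef

variable {M : Matrix (Fin 3) (Fin 3) ℤ}

lemma cornerSchur (hM : M.PosDef) : (cornerSchur M).PosDef := by
  have hsym := isHermitian_iff_isSymm.mp hM.1
  refine .of_dotProduct_mulVec_pos (isHermitian_iff_isSymm.mpr ?_) fun w hw => ?_
  · ext i j; fin_cases i <;> fin_cases j <;> rfl
  obtain ⟨y, z, rfl⟩ : ∃ y z, w = ![y, z] := ⟨w 0, w 1, by ext i; fin_cases i <;> rfl⟩
  have hA := hM.diag_pos (i := 0)
  have hv : ![-(M 0 1 * y + M 0 2 * z), M 0 0 * y, M 0 0 * z] ≠ 0 := fun h => hw <| by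
    have hy : M 0 0 * y = 0 := by simpa using congrFun h 1
    have hz : M 0 0 * z = 0 := by simpa using congrFun h 2
    simp_all [hA.ne']
  have hQ := hsym.apply_zero_zero_mul_dotProduct_mulVec (-(M 0 1 * y + M 0 2 * z))
    (M 0 0 * y) (M 0 0 * z)
  have hscale : ![M 0 0 * y, M 0 0 * z] ⬝ᵥ (Matrix.cornerSchur M *ᵥ ![M 0 0 * y, M 0 0 * z]) =
      M 0 0 ^ 2 * (![y, z] ⬝ᵥ (Matrix.cornerSchur M *ᵥ ![y, z])) := by
    simp only [dotProduct, mulVec, Fin.sum_univ_two, cons_val_zero, cons_val_one,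
      cons_val_fin_one]
    ring
  have := hM.dotProduct_mulVec_pos_int hv
  rw [star_trivial]
  nlinarith

lemma twentySeven_mul_pow_three_le_sixtyFour_mul_det (hM : M.PosDef)
    (hmin : ∀ w ≠ 0, M 0 0 ≤ w ⬝ᵥ (M *ᵥ w)) : 27 * M 0 0 ^ 3 ≤ 64 * M.det := by
  have hsym := isHermitian_iff_isSymm.mp hM.1
  have hA := hM.diag_pos (i := 0)
  obtain ⟨w, hw, hw3⟩ := hM.cornerSchur.exists_three_mul_sq_le_four_mul_det
  have hν := hM.cornerSchur.dotProduct_mulVec_pos_int hw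
  rw [hsym.det_cornerSchur] at hw3
  obtain ⟨y, z, rfl⟩ : ∃ y z, w = ![y, z] := ⟨w 0, w 1, by ext i; fin_cases i <;> rfl⟩
  obtain ⟨x, hx⟩ := exists_sq_two_mul_mul_add_le hA (M 0 1 * y + M 0 2 * z)
  have hv := hmin ![x, y, z] fun h => hw <| by
    have h1 := congrFun h 1
    have h2 := congrFun h 2
    simp_all
  have hQ := hsym.apply_zero_zero_mul_dotProduct_mulVec x y z
  set ν := ![y, z] ⬝ᵥ (Matrix.cornerSchur M *ᵥ ![y, z])
  have h1 : 3 * M 0 0 ^ 2 ≤ 4 * ν := by nlinarith [mul_le_mul_of_nonneg_left hv hA.le]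
  have h2 : 9 * M 0 0 ^ 4 ≤ 16 * ν ^ 2 := by nlinarith
  nlinarith

lemma exists_det_eq_one_forall_le_fin_three (hM : M.PosDef) :
    ∃ U : Matrix (Fin 3) (Fin 3) ℤ, U.det = 1 ∧
      ∀ w ≠ 0, (Uᵀ * M * U) 0 0 ≤ w ⬝ᵥ ((Uᵀ * M * U) *ᵥ w) :=
  hM.exists_det_eq_one_forall_le 0 fun _ hv => hv.exists_det_eq_one_fin_three

lemma exists_eq_transpose_mul_self_fin_three (hM : M.PosDef) (hdet : M.det = 1) :
    ∃ V : Matrix (Fin 3) (Fin 3) ℤ, M = Vᵀ * V := by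
  obtain ⟨U, hU, hmin⟩ := hM.exists_det_eq_one_forall_le_fin_three
  have hM' := hM.transpose_mul_mul (U := U) (by simp [hU])
  have hdet' : (Uᵀ * M * U).det = 1 := by simp [det_mul, hU, hdet]
  have h00 : (Uᵀ * M * U) 0 0 = 1 := by
    have h := hM'.twentySeven_mul_pow_three_le_sixtyFour_mul_det hmin
    have hpos := hM'.diag_pos (i := 0)
    rw [hdet'] at h
    by_contra hne
    nlinarith [pow_le_pow_left₀ zero_le_two (show 2 ≤ (Uᵀ * M * U) 0 0 by omega) 3]
  have hsym := isHermitian_iff_isSymm.mp hM'.1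
  obtain ⟨W, hW⟩ := hM'.cornerSchur.exists_eq_transpose_mul_self_fin_two
    (by rw [hsym.det_cornerSchur, h00, hdet', mul_one])
  exact exists_eq_transpose_mul_self_of_transpose_mul_mul (by simp [hU])
    (hsym.eq_transpose_mul_self_fin_three h00 hW)

end PosDef

end Matrix

lemma jacobiSym_neg_two_mul_sub_one {N : ℕ} (hN : N % 4 = 1 ∨ N % 4 = 2) :
    jacobiSym (-N) (2 * N - 1) = 1 := by
  have hodd : Odd (2 * N - 1) := by rw [Nat.odd_iff]; omega
  have hmod : -N * 2 ≡ -1 [ZMOD (2 * N - 1 : ℕ)] :=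
    Int.modEq_iff_dvd.mpr ⟨1, by push_cast [show 1 ≤ 2 * N by omega]; ring⟩
  have h2 : jacobiSym 2 (2 * N - 1) ^ 2 = 1 :=
    jacobiSym.sq_one (by simpa [Int.gcd] using Nat.coprime_two_left.mpr hodd)
  calc jacobiSym (-N) (2 * N - 1)
      = jacobiSym (-N * 2) (2 * N - 1) * jacobiSym 2 (2 * N - 1) := by
        rw [jacobiSym.mul_left, mul_assoc, ← sq, h2, mul_one]
    _ = jacobiSym (-2) (2 * N - 1) := by
        rw [jacobiSym.mod_left' hmod, ← jacobiSym.mul_left]; norm_num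
    _ = 1 := by
        rw [jacobiSym.at_neg_two hodd, ZMod.χ₈'_nat_eq_if_mod_eight]
        have : (2 * N - 1) % 8 = 1 ∨ (2 * N - 1) % 8 = 3 := by omega
        rcases this with h | h <;> simp [h, Nat.odd_iff.mp hodd]

lemma exists_prime_dvd_add_one_dvd_sq_add {N : ℕ} (hN : N % 4 = 1 ∨ N % 4 = 2) :
    ∃ p : ℕ, p.Prime ∧ N ∣ p + 1 ∧ ∃ F : ℤ, (p : ℤ) ∣ F ^ 2 + N := by
  have : NeZero (4 * N) := ⟨by omega⟩
  have hinv : ((2 * N - 1 : ℕ) : ZMod (4 * N)) * (2 * N - 1 : ℕ) = 1 := by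
    have : (2 * N - 1) * (2 * N - 1) = 4 * N * (N - 1) + 1 := by
      zify [show 1 ≤ N by omega, show 1 ≤ 2 * N by omega]; ring
    rw [← Nat.cast_mul, this]; simp
  obtain ⟨p, -, hp, hpc⟩ :=
    Nat.forall_exists_prime_gt_and_eq_mod (IsUnit.of_mul_eq_one _ hinv) 0
  have hpc : p ≡ 2 * N - 1 [MOD 4 * N] := (ZMod.natCast_eq_natCast_iff _ _ _).mp hpc
  have : Fact p.Prime := ⟨hp⟩
  refine ⟨p, hp, ?_, ?_⟩
  · have : p + 1 ≡ 2 * N [MOD N] := by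
      simpa [show 2 * N - 1 + 1 = 2 * N by omega] using (hpc.of_mul_left 4).add_right 1
    exact Nat.modEq_zero_iff_dvd.mp (this.trans (Nat.modEq_zero_iff_dvd.mpr (dvd_mul_left N 2)))
  have hodd : Odd p := by
    have := hpc.of_dvd (Dvd.intro (2 * N) (by ring) : 2 ∣ 4 * N)
    rw [Nat.odd_iff]; unfold Nat.ModEq at this; omega
  have hJ : jacobiSym (-N) p = 1 := by
    rw [jacobiSym.mod_right _ hodd, ← jacobiSym_neg_two_mul_sub_one hN,
      jacobiSym.mod_right _ (by rw [Nat.odd_iff]; omega : Odd (2 * N - 1))]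
    simpa using congrArg (jacobiSym (-N)) hpc
  obtain ⟨s, hs⟩ := ZMod.isSquare_of_jacobiSym_eq_one hJ
  refine ⟨s.val, (ZMod.intCast_zmod_eq_zero_iff_dvd _ p).mp ?_⟩
  push_cast at hs ⊢
  rw [ZMod.natCast_val, ZMod.cast_id, sq, ← hs]; ring

lemma exists_posDef_det_eq_one_apply_zero_zero {N p : ℕ} (hN : 0 < N) (hp : 0 < p)
    (hNp : (N : ℤ) ∣ p + 1) {F : ℤ} (hpF : (p : ℤ) ∣ F ^ 2 + N) :
    ∃ M : Matrix (Fin 3) (Fin 3) ℤ, M.PosDef ∧ M.det = 1 ∧ M 0 0 = N := by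
  obtain ⟨m, hm⟩ := hNp
  obtain ⟨e, he⟩ := hpF
  refine ⟨!![(N : ℤ), 1, -F; 1, m, 0; -F, 0, e * m - 1], ?_, ?_, rfl⟩
  · refine .of_dotProduct_mulVec_pos (isHermitian_iff_isSymm.mpr ?_) fun v hv => ?_
    · ext i j; fin_cases i <;> fin_cases j <;> rfl
    have key : N * p * (star v ⬝ᵥ (!![(N : ℤ), 1, -F; 1, m, 0; -F, 0, e * m - 1] *ᵥ v)) =
        p * (N * v 0 + v 1 - F * v 2) ^ 2 + (p * v 1 + F * v 2) ^ 2 + N * v 2 ^ 2 := by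
      simp only [dotProduct, mulVec, star_trivial, Fin.sum_univ_three, of_apply, cons_val',
        cons_val_zero, cons_val_one, cons_val, cons_val_fin_one]
      linear_combination (-(p * v 1 ^ 2) - p * v 2 ^ 2 * e) * hm + (-(v 2 ^ 2) - p * v 2 ^ 2) * he
    have hsum : 0 < (p : ℤ) * (N * v 0 + v 1 - F * v 2) ^ 2 + (p * v 1 + F * v 2) ^ 2 +
        N * v 2 ^ 2 := by
      rcases eq_or_ne (v 2) 0 with h2 | h2
      · rcases eq_or_ne (v 1) 0 with h1 | h1
        · have h0 : v 0 ≠ 0 := fun h0 => hv (by ext i; fin_cases i <;> simp [*])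
          simp only [h1, h2, mul_zero, add_zero, sub_zero]
          positivity
        · simp only [h2, mul_zero, add_zero, sub_zero]
          positivity
      · positivity
    rw [← key] at hsum
    exact pos_of_mul_pos_right hsum (by positivity)
  · rw [det_fin_three]
    simp only [of_apply, cons_val', cons_val_zero, cons_val_one, cons_val, cons_val_fin_one]
    linear_combination (-m * e) * hm - m * he

theorem exists_sq_add_sq_add_sq_of_mod_four {N : ℕ} (hN : N % 4 = 1 ∨ N % 4 = 2) :
    ∃ x y z : ℤ, (N : ℤ) = x ^ 2 + y ^ 2 + z ^ 2 := by
  obtain ⟨p, hp, hNp, F, hpF⟩ := exists_prime_dvd_add_one_dvd_sq_add hN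
  obtain ⟨M, hM, hdet, hM00⟩ :=
    exists_posDef_det_eq_one_apply_zero_zero (by omega) hp.pos (by exact_mod_cast hNp) hpF
  obtain ⟨V, rfl⟩ := hM.exists_eq_transpose_mul_self_fin_three hdet
  exact ⟨V 0 0, V 1 0, V 2 0, by simp [← hM00, mul_apply, Fin.sum_univ_three, sq]⟩

lemma exists_eq_sq_add_sq_add_mul_add_one {K : ℤ} (hK : 0 ≤ K) :
    ∃ a b c : ℤ, K = a ^ 2 + b ^ 2 + c * (c + 1) := by
  obtain ⟨x, y, z, h⟩ := exists_sq_add_sq_add_sq_of_mod_four (N := (4 * K + 1).toNat) (by omega)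
  rw [Int.toNat_of_nonneg (by omega)] at h
  rcases Int.even_or_odd' x with ⟨a, rfl | rfl⟩ <;>
    rcases Int.even_or_odd' y with ⟨b, rfl | rfl⟩ <;>
    rcases Int.even_or_odd' z with ⟨c, rfl | rfl⟩ <;> ring_nf at h
  all_goals first
    | omega
    | exact ⟨a, b, c, by linarith⟩
    | exact ⟨a, c, b, by linarith⟩
    | exact ⟨b, c, a, by linarith⟩

lemma exists_eq_sq_add_mul_add_one_add_mul_add_one {K : ℤ} (hK : 0 ≤ K) :
    ∃ a b c : ℤ, K = a ^ 2 + b * (b + 1) + c * (c + 1) := by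
  obtain ⟨x, y, z, h⟩ := exists_sq_add_sq_add_sq_of_mod_four (N := (4 * K + 2).toNat) (by omega)
  rw [Int.toNat_of_nonneg (by omega)] at h
  rcases Int.even_or_odd' x with ⟨a, rfl | rfl⟩ <;>
    rcases Int.even_or_odd' y with ⟨b, rfl | rfl⟩ <;>
    rcases Int.even_or_odd' z with ⟨c, rfl | rfl⟩ <;> ring_nf at h
  all_goals first
    | omega
    | exact ⟨a, b, c, by linarith⟩
    | exact ⟨b, a, c, by linarith⟩
    | exact ⟨c, a, b, by linarith⟩

lemma two_mul_polygonal (m : ℕ) (x : ℤ) :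
    2 * polygonal m x = ((m : ℤ) - 2) * (x * (x - 1)) + 2 * x := by
  have h : ((m : ℤ) - 2) * x ^ 2 - ((m : ℤ) - 4) * x =
      ((m : ℤ) - 2) * (x * (x - 1)) + 2 * x := by
    ring
  rw [polygonal, h, Int.mul_ediv_cancel']
  exact dvd_add (dvd_mul_of_dvd_right (Int.even_mul_pred_self x).two_dvd _) (dvd_mul_right 2 x)

lemma sum_polygonal_eq {ι : Type*} [Fintype ι] (m : ℕ) {x : ι → ℤ} {K s : ℤ}
    (h2 : ∑ i, x i * (x i - 1) = 2 * K) (h1 : ∑ i, x i = s) :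
    ∑ i, polygonal m (x i) = K * ((m : ℤ) - 2) + s := by
  refine mul_left_cancel₀ two_ne_zero ?_
  rw [Finset.mul_sum]
  simp_rw [two_mul_polygonal]
  rw [Finset.sum_add_distrib, ← Finset.mul_sum, ← Finset.mul_sum, h2, h1]
  ring

lemma exists_fin_six_sum_eq {K s : ℤ} (hK : 0 ≤ K) (hKs : 0 ≤ K + s) (hs5 : -5 ≤ s)
    (hs1 : s ≤ 1) : ∃ v : Fin 6 → ℤ, ∑ i, v i * (v i - 1) = 2 * K ∧ ∑ i, v i = s := by
  interval_cases s
  · obtain ⟨a, b, c, h⟩ := exists_eq_sq_add_sq_add_mul_add_one (K := K - 5) (by omega)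
    refine ⟨![a - 1, -a - 1, b - 1, -b - 1, c, -c - 1], ?_, ?_⟩ <;>
      simp only [Fin.sum_univ_six, cons_val] <;> linarith
  · obtain ⟨a, b, c, h⟩ := exists_eq_sq_add_mul_add_one_add_mul_add_one (K := K - 4) (by omega)
    refine ⟨![a - 1, -a - 1, b, -b - 1, c, -c - 1], ?_, ?_⟩ <;>
      simp only [Fin.sum_univ_six, cons_val] <;> linarith
  · obtain ⟨a, b, c, h⟩ := exists_eq_sq_add_sq_add_mul_add_one (K := K - 3) (by omega)
    refine ⟨![a, -a, b - 1, -b - 1, c, -c - 1], ?_, ?_⟩ <;>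
      simp only [Fin.sum_univ_six, cons_val] <;> linarith
  · obtain ⟨a, b, c, h⟩ := exists_eq_sq_add_mul_add_one_add_mul_add_one (K := K - 2) (by omega)
    refine ⟨![a, -a, b, -b - 1, c, -c - 1], ?_, ?_⟩ <;>
      simp only [Fin.sum_univ_six, cons_val] <;> linarith
  · obtain ⟨a, b, c, h⟩ := exists_eq_sq_add_sq_add_mul_add_one (K := K - 1) (by omega)
    refine ⟨![a, -a, b, -b, c, -c - 1], ?_, ?_⟩ <;>
      simp only [Fin.sum_univ_six, cons_val] <;> linarith
  · rcases hK.eq_or_lt with rfl | hK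
    · exact ⟨0, by simp, by simp⟩
    obtain ⟨a, b, c, h⟩ := exists_eq_sq_add_mul_add_one_add_mul_add_one (K := K - 1) (by omega)
    refine ⟨![a, -a, b + 1, -b, c, -c - 1], ?_, ?_⟩ <;>
      simp only [Fin.sum_univ_six, cons_val] <;> linarith
  · obtain ⟨a, b, c, h⟩ := exists_eq_sq_add_sq_add_mul_add_one hK
    refine ⟨![a, -a, b, -b, c + 1, -c], ?_, ?_⟩ <;>
      simp only [Fin.sum_univ_six, cons_val] <;> linarith

lemma exists_append_ones {k n : ℕ} (v : Fin k → ℤ) (t : ℕ) (h : k + t ≤ n) :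
    ∃ x : Fin n → ℤ, ∑ i, x i * (x i - 1) = ∑ i, v i * (v i - 1) ∧ ∑ i, x i = ∑ i, v i + t := by
  obtain ⟨z, rfl⟩ := Nat.exists_eq_add_of_le h
  exact ⟨Fin.append (Fin.append v fun _ : Fin t => 1) fun _ : Fin z => 0,
    by simp [Fin.sum_univ_add], by simp [Fin.sum_univ_add]⟩

theorem split_universal_general (r m : ℕ) (hr : 7 ≤ r) (k1 : ℕ) (k3 : ℤ)
    (hk3l : -5 ≤ k3) (hk3u : k3 ≤ (r : ℤ) - 6)
    (hne : ¬ (-5 ≤ k3 ∧ k3 ≤ -1 ∧ (k1 : ℤ) ≤ |k3| - 1)) :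
    ∃ x : Fin (r - 1) → ℤ,
      ∑ j, polygonal m (x j) = (k1 : ℤ) * ((m : ℤ) - 2) + k3 := by
  have hk : 0 ≤ (k1 : ℤ) + k3 := by
    by_contra h
    exact hne ⟨hk3l, by omega, by rw [abs_of_neg (by omega)]; omega⟩
  obtain ⟨v, hv2, hv1⟩ :=
    exists_fin_six_sum_eq (K := k1) (s := min k3 1) (by omega) (by omega) (by omega) (by omega)
  obtain ⟨x, hx2, hx1⟩ := exists_append_ones (n := r - 1) v (k3 - 1).toNat (by omega)
  exact ⟨x, sum_polygonal_eq m (hx2.trans hv2) (by rw [hx1, hv1]; omega)⟩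

theorem split_universal (r m : ℕ) (hr : 7 ≤ r) (hrm : r < m - 3) (k1 : ℕ) (k3 : ℤ)
    (hk3l : -5 ≤ k3) (hk3u : k3 ≤ (r : ℤ) - 6) (hpos : 0 ≤ (k1 : ℤ) * ((m : ℤ) - 2) + k3)
    (hne : ¬ (-5 ≤ k3 ∧ k3 ≤ -1 ∧ (k1 : ℤ) ≤ |k3| - 1)) :
    ∃ x : Fin (r - 1) → ℤ,
      ∑ j, polygonal m (x j) = (k1 : ℤ) * ((m : ℤ) - 2) + k3 :=
  split_universal_general r m hr k1 k3 hk3l hk3u hne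
end

section
/- Let r and m be integers with 7 ≤ r < m - 3, let k2 ≥ 1 be an integer, let k3 be an integer with -5 ≤ k3 ≤ -1, and let k1 be an integer with 0 ≤ k1 ≤ |k3| - 1. Then n = k1(m-2) + r·k2 + k3 can be written as ∑_{i=1}^{r-1} P_m(x_i) + r·∑_{j=1}^{k2 - 1} P_m(y_j) for some integers x_i, y_j. -/
lemma step_sum (n a b t : ℕ) (h : a + b + t ≤ n) (u v w : ℤ) :
    ∑ i ∈ Finset.range n,
      (if i < a then u else if i < a + b then v else if i < a + b + t then w else 0)
      = a * u + b * v + t * w := by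
  have h1 : a ≤ a + b := by omega
  have h2 : a + b ≤ a + b + t := by omega
  rw [Finset.range_eq_Ico,
    ← Finset.sum_Ico_consecutive _ (Nat.zero_le (a+b+t)) h,
    ← Finset.sum_Ico_consecutive _ (Nat.zero_le (a+b)) h2,
    ← Finset.sum_Ico_consecutive _ (Nat.zero_le a) h1]
  have e1 : ∑ i ∈ Finset.Ico 0 a,
      (if i < a then u else if i < a + b then v else if i < a + b + t then w else 0)
      = (a : ℤ) * u := by
    rw [Finset.sum_congr rfl (fun i hi => by
        simp only [Finset.mem_Ico] at hi
        rw [if_pos hi.2]), Finset.sum_const, Nat.card_Ico]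
    simp [mul_comm]
  have e2 : ∑ i ∈ Finset.Ico a (a+b),
      (if i < a then u else if i < a + b then v else if i < a + b + t then w else 0)
      = (b : ℤ) * v := by
    rw [Finset.sum_congr rfl (fun i hi => by
        simp only [Finset.mem_Ico] at hi
        rw [if_neg (by omega), if_pos hi.2]), Finset.sum_const, Nat.card_Ico]
    simp [mul_comm]
  have e3 : ∑ i ∈ Finset.Ico (a+b) (a+b+t),
      (if i < a then u else if i < a + b then v else if i < a + b + t then w else 0)
      = (t : ℤ) * w := by
    rw [Finset.sum_congr rfl (fun i hi => by
        simp only [Finset.mem_Ico] at hi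
        rw [if_neg (by omega), if_neg (by omega), if_pos hi.2]),
      Finset.sum_const, Nat.card_Ico]
    simp [mul_comm]
  have e4 : ∑ i ∈ Finset.Ico (a+b+t) n,
      (if i < a then u else if i < a + b then v else if i < a + b + t then w else 0) = 0 := by
    apply Finset.sum_eq_zero
    intro i hi
    simp only [Finset.mem_Ico] at hi
    rw [if_neg (by omega), if_neg (by omega), if_neg (by omega)]
  rw [e1, e2, e3, e4]; ring

theorem exceptional_representation (r m : ℕ) (hr : 7 ≤ r) (hrm : r < m - 3)
    (k2 : ℕ) (hk2 : 1 ≤ k2) (k3 : ℤ) (hk3l : -5 ≤ k3) (hk3u : k3 ≤ -1)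
    (k1 : ℕ) (hk1 : (k1 : ℤ) ≤ |k3| - 1) :
    ∃ (x : Fin (r - 1) → ℤ) (y : Fin (k2 - 1) → ℤ),
      ∑ i, polygonal m (x i) + (r : ℤ) * ∑ j, polygonal m (y j) =
        (k1 : ℤ) * ((m : ℤ) - 2) + (r : ℤ) * (k2 : ℤ) + k3 := by
  have habs : |k3| = -k3 := abs_of_neg (by omega)
  rw [habs] at hk1
  have hk14 : k1 ≤ 4 := by omega
  set a : ℕ := (k1 + 2) / 3 with ha
  have hab : a ≤ k1 := by omega
  set b : ℕ := k1 - a with hb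
  have ht0 : (0 : ℤ) ≤ (r : ℤ) + k3 + k1 - 3 * a := by omega
  set t : ℕ := ((r : ℤ) + k3 + (k1 : ℤ) - 3 * a).toNat with htdef
  have htZ : (t : ℤ) = (r : ℤ) + k3 + k1 - 3 * a := Int.toNat_of_nonneg ht0
  have habt : a + b + t ≤ r - 1 := by omega
  refine ⟨fun i => if i.val < a then 2 else if i.val < a + b then -1
      else if i.val < a + b + t then 1 else 0, fun _ => 1, ?_⟩
  have hx : ∑ i : Fin (r-1), polygonal m
      (if i.val < a then 2 else if i.val < a + b then -1
        else if i.val < a + b + t then 1 else 0)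
      = (a : ℤ) * m + b * ((m : ℤ) - 3) + t * 1 := by
    rw [Fin.sum_univ_eq_sum_range (fun i => polygonal m
      (if i < a then 2 else if i < a + b then -1 else if i < a + b + t then 1 else 0))]
    have hpt : ∀ i ∈ Finset.range (r-1), polygonal m
        (if i < a then 2 else if i < a + b then -1 else if i < a + b + t then 1 else 0)
        = (if i < a then (m : ℤ) else if i < a + b then (m : ℤ) - 3
            else if i < a + b + t then 1 else 0) := by
      intro i _
      split_ifs with h1 h2 h3
      · exact polygonal_two m
      · exact polygonal_neg_one m
      · exact polygonal_one m
      · exact polygonal_zero m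
    rw [Finset.sum_congr rfl hpt]
    exact step_sum (r-1) a b t habt _ _ _
  rw [hx]
  have hy : ∑ j : Fin (k2-1), polygonal m 1 = ((k2 : ℤ) - 1) := by
    rw [Finset.sum_const, polygonal_one]
    simp [Nat.cast_sub hk2]
  rw [hy]
  have hbZ : (b : ℤ) = k1 - a := by omega
  linear_combination ((m : ℤ) - 3) * hbZ + htZ
end
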